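/- Let A be a semi-pre-C*-algebra over ℂ and let S ⊆ A be a unital *-subspace, i.e. a ℂ-linear subspace containing 1 and closed under the involution. Then every state on S extends to a state on A (Krein's extension theorem). -/

import Mathlib

/-- A *-positive cone making a unital complex *-algebra `A` into a
semi-pre-C*-algebra. -/
structure IsSemiPreCstarCone (A : Type*) [Ring A] [Algebra ℂ A] [StarRing A]
    (P : Set A) : Prop where
  herm : ∀ a ∈ P, star a = a
  smul_one_mem : ∀ t : ℝ, 0 ≤ t → ((t : ℂ) • (1 : A)) ∈ P
  smul_add_mem : ∀ l : ℝ, 0 ≤ l → ∀ a ∈ P, ∀ b ∈ P, (l : ℂ) • a + b ∈ P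
  conj_mem : ∀ a ∈ P, ∀ x : A, star x * a * x ∈ P
  archimedean : ∀ x : A, ∃ R : ℝ, 0 < R ∧ (R : ℂ) • (1 : A) - star x * x ∈ P

/-- A state on a semi-pre-C*-algebra `(A, P)`. -/
structure IsStateOn {A : Type*} [Ring A] [Algebra ℂ A] [StarRing A]
    (P : Set A) (φ : A →ₗ[ℂ] ℂ) : Prop where
  map_one : φ 1 = 1
  map_star : ∀ x : A, φ (star x) = starRingEnd ℂ (φ x)
  pos : ∀ a ∈ P, ∃ r : ℝ, 0 ≤ r ∧ φ a = r

/-!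
The real part of `ψ` is nonnegative on `S` ∩ `{x | x + x⋆ ∈ A₊}`, a cone which the archimedean axiom
makes cofinal in `A` (every `x` plus a real multiple of `1` lies in it), so M. Riesz's extension
theorem extends it to a real functional `g` on `A`, nonnegative on that cone; hence `g` is positive
on `A₊` and `⋆`-invariant. The state is the complexification `x ↦ g x - i g (i • x)`, and it is
positive as soon as `g (i • a) = 0` for `a ∈ A₊`.

That vanishing is subtle because the axioms do not make `⋆` conjugate-linear: `u = ⋆(i • 1)`
(`starI`) is only a central square root of `-1`, and `w = i • u` (`iStarI`) a central hermitian
involution, equal to `1` exactly when `⋆(i • 1) = -i • 1`. For `a ∈ A₊` the element `b = a - w a`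
lies in `A₊` with `w b = -b`, so `g b = 0`; positivity of `(1 + s i)⋆ b (1 + s i)` for all real `s`
then forces `g (i • b) = 0`, and `g (i • b) = 2 g (i • a)`.
-/

open Complex

section StarI

variable (A : Type*) [Ring A] [Algebra ℂ A] [StarRing A]

noncomputable def starI : A := star (I • (1 : A))

noncomputable def iStarI : A := I • starI A

variable {A}

theorem star_smul_I (x : A) : star (I • x) = starI A * star x := by
  rw [← mul_smul_one, star_mul, starI]

theorem starI_mul_comm (x : A) : starI A * x = x * starI A := by
  calc starI A * x = star (star x * I • 1) := by rw [star_mul, star_star, starI]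
    _ = star (I • 1 * star x) := by rw [mul_smul_one, smul_one_mul]
    _ = x * starI A := by rw [star_mul, star_star, starI]

theorem starI_mul_self : starI A * starI A = -1 := by
  rw [starI, ← star_mul, smul_one_mul, smul_smul, I_mul_I, neg_one_smul, star_neg, star_one]

theorem iStarI_mul_comm (x : A) : iStarI A * x = x * iStarI A := by
  rw [iStarI, smul_mul_assoc, mul_smul_comm, starI_mul_comm]

theorem star_iStarI : star (iStarI A) = iStarI A := by
  rw [iStarI, star_smul_I, starI, star_star, mul_smul_one]

theorem iStarI_mul_self : iStarI A * iStarI A = 1 := by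
  rw [iStarI, smul_mul_smul_comm, I_mul_I, starI_mul_self, neg_one_smul, neg_neg]

end StarI

theorem Module.Dual.extendRCLike_apply_eq_mk {F : Type*} [AddCommGroup F] [Module ℂ F]
    (g : F →ₗ[ℝ] ℝ) (x : F) : Module.Dual.extendRCLike (𝕜 := ℂ) g x = ⟨g x, -g (I • x)⟩ :=
  Complex.ext (by simp [Module.Dual.extendRCLike_apply]) (by simp [Module.Dual.extendRCLike_apply])

namespace IsSemiPreCstarCone

variable {A : Type*} [Ring A] [Algebra ℂ A] [StarRing A] {P : Set A} {a : A}
  {g : A →ₗ[ℝ] ℝ}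

theorem zero_mem (hP : IsSemiPreCstarCone A P) : (0 : A) ∈ P := by
  simpa using hP.smul_one_mem 0 le_rfl

theorem add_mem (hP : IsSemiPreCstarCone A P) {b : A} (ha : a ∈ P) (hb : b ∈ P) :
    a + b ∈ P := by
  simpa using hP.smul_add_mem 1 zero_le_one a ha b hb

theorem smul_mem (hP : IsSemiPreCstarCone A P) {r : ℝ} (hr : 0 ≤ r) (ha : a ∈ P) :
    r • a ∈ P := by
  simpa [Complex.coe_smul] using hP.smul_add_mem r hr a ha 0 hP.zero_mem

theorem one_mem (hP : IsSemiPreCstarCone A P) : (1 : A) ∈ P := by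
  simpa using hP.smul_one_mem 1 zero_le_one

theorem star_mul_self_mem (hP : IsSemiPreCstarCone A P) (x : A) : star x * x ∈ P := by
  simpa using hP.conj_mem 1 hP.one_mem x

theorem star_real_smul_one (hP : IsSemiPreCstarCone A P) (r : ℝ) :
    star (r • (1 : A)) = r • 1 := by
  have herm (t : ℝ) (ht : 0 ≤ t) : star (t • (1 : A)) = t • 1 := by
    rw [← Complex.coe_smul]; exact hP.herm _ (hP.smul_one_mem t ht)
  rcases le_total 0 r with hr | hr
  · exact herm r hr
  · simpa using herm (-r) (neg_nonneg.mpr hr)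

theorem star_real_smul (hP : IsSemiPreCstarCone A P) (r : ℝ) (x : A) :
    star (r • x) = r • star x := by
  rw [← smul_one_mul, star_mul, hP.star_real_smul_one, mul_smul_one]

theorem exists_smul_one_add_mem (hP : IsSemiPreCstarCone A P) (x : A) :
    ∃ t : ℝ, t • (1 : A) + (x + star x) ∈ P := by
  obtain ⟨R, -, hR⟩ := hP.archimedean (1 - x)
  refine ⟨R - 1, ?_⟩
  convert hP.add_mem hR (hP.star_mul_self_mem x) using 1
  rw [star_sub, star_one, ← Complex.coe_smul, Complex.ofReal_sub, sub_smul, Complex.ofReal_one,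
    one_smul]
  noncomm_ring

theorem iStarI_mul_mem (hP : IsSemiPreCstarCone A P) (ha : a ∈ P) : iStarI A * a ∈ P := by
  simpa [starI, iStarI, mul_smul_one] using hP.conj_mem a ha (I • 1)

theorem sub_iStarI_mul_mem (hP : IsSemiPreCstarCone A P) (ha : a ∈ P) :
    a - iStarI A * a ∈ P := by
  have hv : star (1 - iStarI A) = 1 - iStarI A := by rw [star_sub, star_one, star_iStarI]
  have hcomm : a * iStarI A = iStarI A * a := (iStarI_mul_comm a).symm
  have hww : iStarI A * a * iStarI A = a := by
    rw [mul_assoc, hcomm, ← mul_assoc, iStarI_mul_self, one_mul]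
  have key : star (1 - iStarI A) * a * (1 - iStarI A) = (2 : ℝ) • (a - iStarI A * a) := by
    simp only [hv, sub_mul, mul_sub, one_mul, mul_one, hcomm, hww, two_smul]
    abel
  have h := hP.smul_mem (r := 2⁻¹) (by norm_num) (key ▸ hP.conj_mem a ha (1 - iStarI A))
  rwa [smul_smul, inv_mul_cancel₀ two_ne_zero, one_smul] at h

theorem conj_one_add_smul_I (hP : IsSemiPreCstarCone A P) (s : ℝ) (a : A) :
    star (1 + s • I • (1 : A)) * a * (1 + s • I • 1) =
      a + s • (I • a + starI A * a) + (s * s) • (iStarI A * a) := by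
  rw [star_add, star_one, hP.star_real_smul, ← starI]
  simp only [add_mul, mul_add, one_mul, mul_one, smul_mul_assoc, mul_smul_comm, iStarI]
  module

theorem apply_starI_mul (hP : IsSemiPreCstarCone A P) (hg_star : ∀ x, g (star x) = g x)
    (ha : a ∈ P) : g (starI A * a) = g (I • a) := by
  rw [← hg_star (I • a), star_smul_I, hP.herm a ha]

theorem sq_apply_I_smul_le (hP : IsSemiPreCstarCone A P) (hg : ∀ a ∈ P, 0 ≤ g a)
    (hg_star : ∀ x, g (star x) = g x) (ha : a ∈ P) :
    g (I • a) ^ 2 ≤ g a * g (iStarI A * a) := by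
  have hquad (s : ℝ) : 0 ≤ g (iStarI A * a) * (s * s) + 2 * g (I • a) * s + g a := by
    have h := hg _ (hP.conj_mem a ha (1 + s • I • 1))
    rw [hP.conj_one_add_smul_I, map_add, map_add, map_smul, map_smul, map_add,
      hP.apply_starI_mul hg_star ha] at h
    simp only [smul_eq_mul] at h
    linarith
  have := discrim_le_zero hquad
  rw [discrim] at this
  linarith

theorem apply_I_smul_eq_zero (hP : IsSemiPreCstarCone A P) (hg : ∀ a ∈ P, 0 ≤ g a)
    (hg_star : ∀ x, g (star x) = g x) (ha : a ∈ P) : g (I • a) = 0 := by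
  set b := a - iStarI A * a
  have hb : b ∈ P := hP.sub_iStarI_mul_mem ha
  have hwb : iStarI A * b = -b := by
    rw [mul_sub, ← mul_assoc, iStarI_mul_self, one_mul, neg_sub]
  have hgb : g b = 0 := by
    have := hg _ (hP.iStarI_mul_mem hb)
    rw [hwb, map_neg] at this
    linarith [hg b hb]
  have hIb : g (I • b) = 0 := by
    have := hP.sq_apply_I_smul_le hg hg_star hb
    rw [hgb, zero_mul] at this
    exact pow_eq_zero_iff (n := 2) two_ne_zero |>.mp (le_antisymm this (sq_nonneg _))
  have : g (I • b) = 2 * g (I • a) := by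
    rw [smul_sub, iStarI, smul_mul_assoc, smul_smul, I_mul_I, neg_one_smul, sub_neg_eq_add,
      map_add, hP.apply_starI_mul hg_star ha]
    ring
  linarith

def realPartCone (hP : IsSemiPreCstarCone A P) : PointedCone ℝ A where
  carrier := {x | x + star x ∈ P}
  zero_mem' := by simpa using hP.zero_mem
  add_mem' {x y} hx hy := by
    simpa only [Set.mem_ofPred_eq, star_add, add_add_add_comm] using hP.add_mem hx hy
  smul_mem' c x hx := by
    change (c : ℝ) • x + star ((c : ℝ) • x) ∈ P
    rw [hP.star_real_smul, ← smul_add]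
    exact hP.smul_mem c.2 hx

@[simp]
theorem mem_realPartCone (hP : IsSemiPreCstarCone A P) {x : A} :
    x ∈ hP.realPartCone ↔ x + star x ∈ P :=
  Iff.rfl

theorem exists_real_extension (hP : IsSemiPreCstarCone A P) (S : Submodule ℂ A)
    (hone : (1 : A) ∈ S) (hstar : ∀ x ∈ S, star x ∈ S) (ψ : S →ₗ[ℂ] ℂ)
    (ψ_star : ∀ (x : A) (hx : x ∈ S), ψ ⟨star x, hstar x hx⟩ = starRingEnd ℂ (ψ ⟨x, hx⟩))
    (ψ_pos : ∀ (x : A) (hx : x ∈ S), x ∈ P → ∃ r : ℝ, 0 ≤ r ∧ ψ ⟨x, hx⟩ = r) :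
    ∃ g : A →ₗ[ℝ] ℝ, (∀ (x : A) (hx : x ∈ S), g x = (ψ ⟨x, hx⟩).re) ∧
      (∀ a ∈ P, 0 ≤ g a) ∧ ∀ x, g (star x) = g x := by
  let f : A →ₗ.[ℝ] ℝ := ⟨S.restrictScalars ℝ, Complex.reLm.comp (ψ.restrictScalars ℝ)⟩
  have nonneg (x : f.domain) (hx : (x : A) ∈ hP.realPartCone) : 0 ≤ f x := by
    obtain ⟨x, hxS : x ∈ S⟩ := x
    obtain ⟨r, hr, hψ⟩ := ψ_pos _ (S.add_mem hxS (hstar x hxS)) hx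
    rw [show (⟨x + star x, _⟩ : S) = ⟨x, hxS⟩ + ⟨star x, hstar x hxS⟩ from rfl, map_add,
      ψ_star x hxS, Complex.add_conj] at hψ
    change 0 ≤ (ψ ⟨x, hxS⟩).re
    have : 2 * (ψ ⟨x, hxS⟩).re = r := by exact_mod_cast hψ
    linarith
  have dense (y : A) : ∃ x : f.domain, (x : A) + y ∈ hP.realPartCone := by
    obtain ⟨t, ht⟩ := hP.exists_smul_one_add_mem y
    refine ⟨⟨(t / 2) • 1, (S.restrictScalars ℝ).smul_mem _ hone⟩, ?_⟩
    change (t / 2) • (1 : A) + y + star ((t / 2) • (1 : A) + y) ∈ P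
    convert ht using 1
    rw [star_add, hP.star_real_smul_one]
    module
  obtain ⟨g, hgf, hgK⟩ := riesz_extension hP.realPartCone f nonneg dense
  refine ⟨g, fun x hx => hgf ⟨x, hx⟩, fun a ha => hgK a ?_, fun x => ?_⟩
  · rw [mem_realPartCone, hP.herm a ha]
    exact hP.add_mem ha ha
  · have hzero (y : A) (hy : y + star y = 0) : g y = 0 := by
      have h1 := hgK y (by rw [mem_realPartCone, hy]; exact hP.zero_mem)
      have h2 := hgK (-y) <| by
        rw [mem_realPartCone, star_neg, ← neg_add, hy, neg_zero]; exact hP.zero_mem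
      rw [map_neg] at h2
      linarith
    have := hzero (star x - x) (by rw [star_sub, star_star]; abel)
    rw [map_sub] at this
    linarith

theorem isStateOn_extendRCLike (hP : IsSemiPreCstarCone A P)
    (hg : ∀ a ∈ P, 0 ≤ g a) (hg_star : ∀ x, g (star x) = g x) (hg_one : g 1 = 1) :
    IsStateOn P (Module.Dual.extendRCLike g) where
  map_one := by
    have := hP.apply_I_smul_eq_zero hg hg_star hP.one_mem
    apply Complex.ext <;> simp [Module.Dual.extendRCLike_apply_eq_mk, hg_one, this]
  map_star x := by
    obtain ⟨t, ht⟩ := hP.exists_smul_one_add_mem x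
    have h := hP.apply_I_smul_eq_zero hg hg_star ht
    rw [smul_add, smul_add, smul_comm, map_add, map_add, map_smul,
      hP.apply_I_smul_eq_zero hg hg_star hP.one_mem, smul_zero, zero_add] at h
    apply Complex.ext <;> simp [Module.Dual.extendRCLike_apply_eq_mk, hg_star]
    linarith
  pos a ha := ⟨g a, hg a ha, by
    apply Complex.ext <;>
      simp [Module.Dual.extendRCLike_apply_eq_mk, hP.apply_I_smul_eq_zero hg hg_star ha]⟩

end IsSemiPreCstarCone

/-- Krein's extension theorem: every state on a unital *-subspace `S` of a
semi-pre-C*-algebra `A` (a unital self-adjoint linear functional on `S` that is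
nonnegative on `S ∩ A₊`) extends to a state on `A`. -/
theorem krein_state_extension
    {A : Type*} [Ring A] [Algebra ℂ A] [StarRing A] (P : Set A)
    (hP : IsSemiPreCstarCone A P)
    (S : Submodule ℂ A) (hone : (1 : A) ∈ S) (hstar : ∀ x ∈ S, star x ∈ S)
    (ψ : S →ₗ[ℂ] ℂ)
    (ψ_one : ψ ⟨1, hone⟩ = 1)
    (ψ_star : ∀ (x : A) (hx : x ∈ S), ψ ⟨star x, hstar x hx⟩ = starRingEnd ℂ (ψ ⟨x, hx⟩))
    (ψ_pos : ∀ (x : A) (hx : x ∈ S), x ∈ P → ∃ r : ℝ, 0 ≤ r ∧ ψ ⟨x, hx⟩ = r) :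
    ∃ φ : A →ₗ[ℂ] ℂ, IsStateOn P φ ∧ ∀ (x : A) (hx : x ∈ S), φ x = ψ ⟨x, hx⟩ := by
  obtain ⟨g, hgS, hgP, hg_star⟩ := hP.exists_real_extension S hone hstar ψ ψ_star ψ_pos
  have hg_one : g 1 = 1 := by rw [hgS 1 hone, ψ_one, Complex.one_re]
  refine ⟨Module.Dual.extendRCLike g, hP.isStateOn_extendRCLike hgP hg_star hg_one, fun x hx => ?_⟩
  have hIx : g (I • x) = -(ψ ⟨x, hx⟩).im := by
    rw [hgS _ (S.smul_mem I hx)]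
    change (ψ (I • ⟨x, hx⟩)).re = _
    rw [map_smul, smul_eq_mul, Complex.mul_re, Complex.I_re, Complex.I_im]
    ring
  apply Complex.ext <;> simp [Module.Dual.extendRCLike_apply_eq_mk, hgS x hx, hIx]
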